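/- arXiv:2101.12665 — 8 statements merged into one kernel-verified Lean document; each statement's English description precedes it below -/
import Mathlib

section
/- For every t ∈ (0,1), the series Σ_{l=2}^∞ ((l−1)(l+1)(l+2))/(l(2l+1)) · t^{2l} converges and equals (1/4)·[ (9/2) t^{−1} log((1+t)/(1−t)) + 8 log(1−t²) + (23t² − 12t⁴ − 9)/(1−t²)² ]. -/
/-!
Decompose the coefficient into partial fractions,
`(l - 1)(l + 1)(l + 2) / (l (2l + 1)) = l/2 + 3/4 - 2/l + (9/4)/(2l + 1)`.
With `x = t²`, each piece is the tail from `l = 2` of a classical series: `Σ l xˡ = x/(1 - x)²`,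
`Σ xˡ = 1/(1 - x)`, `Σ xˡ/l = -log(1 - x)` and `Σ t²ˡ⁺¹/(2l + 1) = (1/2) log((1 + t)/(1 - t))`.
-/

open Real Finset

lemma coeff_eq_partial_fractions {K : Type*} [Field K] [CharZero K] {l : K} (hl : l ≠ 0) (h2l : 2 * l + 1 ≠ 0) :
    (l - 1) * (l + 1) * (l + 2) / (l * (2 * l + 1)) =
      l / 2 + 3 / 4 - 2 / l + 9 / 4 / (2 * l + 1) := by
  rw [div_add_div _ _ two_ne_zero (by norm_num), div_sub_div _ _ (by norm_num) hl,
    div_div, div_add_div _ _ (by simpa using hl) (by simpa using h2l),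
    div_eq_div_iff (mul_ne_zero hl h2l) (by simp [hl, h2l])]
  ring

section TailsFromTwo

variable {x : ℝ}

lemma hasSum_coe_mul_geometric_from_two (hx : |x| < 1) :
    HasSum (fun n : ℕ => ((n : ℝ) + 2) * x ^ (n + 2)) (x / (1 - x) ^ 2 - x) := by
  have h := (hasSum_nat_add_iff' 2).mpr (hasSum_coe_mul_geometric_of_norm_lt_one (r := x) hx)
  simpa [sum_range_succ] using h

lemma hasSum_geometric_from_two (hx : |x| < 1) :
    HasSum (fun n : ℕ => x ^ (n + 2)) ((1 - x)⁻¹ - 1 - x) := by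
  have h := (hasSum_nat_add_iff' 2).mpr (hasSum_geometric_of_abs_lt_one hx)
  simpa [sum_range_succ, sub_sub] using h

lemma hasSum_pow_div_from_two (hx : |x| < 1) :
    HasSum (fun n : ℕ => x ^ (n + 2) / ((n : ℝ) + 2)) (-log (1 - x) - x) := by
  have h := (hasSum_nat_add_iff' 1).mpr (hasSum_pow_div_log_of_abs_lt_one hx)
  simpa [add_assoc, one_add_one_eq_two] using h

lemma hasSum_pow_div_odd_from_two {t : ℝ} (ht : |t| < 1) :
    HasSum (fun n : ℕ => t ^ (2 * (n + 2)) / (2 * ((n : ℝ) + 2) + 1))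
      (t⁻¹ * (log ((1 + t) / (1 - t)) / 2 - t - t ^ 3 / 3)) := by
  have h1t : 1 + t ≠ 0 := by linarith [neg_abs_le t]
  have h1t' : 1 - t ≠ 0 := by linarith [le_abs_self t]
  have h := ((hasSum_nat_add_iff' 2).mpr (hasSum_log_sub_log_of_abs_lt_one ht)).mul_left
    (t⁻¹ / 2)
  rw [← log_div h1t h1t'] at h
  have hval : t⁻¹ * (log ((1 + t) / (1 - t)) / 2 - t - t ^ 3 / 3) =
      t⁻¹ / 2 * (log ((1 + t) / (1 - t)) -
        ∑ i ∈ range 2, 2 * (1 / (2 * (i : ℝ) + 1)) * t ^ (2 * i + 1)) := by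
    norm_num [sum_range_succ]
    ring
  rw [hval]
  refine h.congr_fun fun n => ?_
  rcases eq_or_ne t 0 with rfl | ht0
  · simp
  · push_cast
    field_simp
    ring

end TailsFromTwo

/-- For `t ∈ (0,1)`, the series `Σ_{l≥2} ((l−1)(l+1)(l+2))/(l(2l+1)) t^{2l}`
converges (here reindexed by `l = n + 2`, `n : ℕ`) and equals
`(1/4)[(9/2) t⁻¹ log((1+t)/(1−t)) + 8 log(1−t²) + (23t² − 12t⁴ − 9)/(1−t²)²]`. -/
theorem stmt7 (t : ℝ) (ht0 : 0 < t) (ht1 : t < 1) :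
    Summable (fun n : ℕ =>
      ((((n : ℝ) + 2) - 1) * (((n : ℝ) + 2) + 1) * (((n : ℝ) + 2) + 2)) /
        (((n : ℝ) + 2) * (2 * ((n : ℝ) + 2) + 1)) * t ^ (2 * (n + 2))) ∧
    ∑' n : ℕ,
        ((((n : ℝ) + 2) - 1) * (((n : ℝ) + 2) + 1) * (((n : ℝ) + 2) + 2)) /
          (((n : ℝ) + 2) * (2 * ((n : ℝ) + 2) + 1)) * t ^ (2 * (n + 2)) =
      (1 / 4) * ((9 / 2) * t⁻¹ * Real.log ((1 + t) / (1 - t))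
        + 8 * Real.log (1 - t ^ 2)
        + (23 * t ^ 2 - 12 * t ^ 4 - 9) / (1 - t ^ 2) ^ 2) := by
  have ht : |t| < 1 := abs_lt.mpr ⟨by linarith, ht1⟩
  have hx : |t ^ 2| < 1 := by rw [abs_pow]; exact pow_lt_one₀ (abs_nonneg t) ht two_ne_zero
  have hsum := ((((hasSum_coe_mul_geometric_from_two hx).mul_left (1 / 2)).add
    ((hasSum_geometric_from_two hx).mul_left (3 / 4))).sub
    ((hasSum_pow_div_from_two hx).mul_left 2)).add
    ((hasSum_pow_div_odd_from_two ht).mul_left (9 / 4))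
  have hseries : HasSum (fun n : ℕ =>
      ((((n : ℝ) + 2) - 1) * (((n : ℝ) + 2) + 1) * (((n : ℝ) + 2) + 2)) /
        (((n : ℝ) + 2) * (2 * ((n : ℝ) + 2) + 1)) * t ^ (2 * (n + 2))) _ :=
    hsum.congr_fun fun n => by
      rw [coeff_eq_partial_fractions (by positivity) (by positivity), pow_mul]
      ring
  refine ⟨hseries.summable, hseries.tsum_eq.trans ?_⟩
  have h1x : 1 - t ^ 2 ≠ 0 := by nlinarith
  field_simp
  ring
end

section
/- For every t ∈ (0,1), the series Σ_{l=2}^∞ ((l−1) l (l+2))/((l+1)(2l+1)) · t^{2l+2} converges and equals (1/4)·[ (9/2) t log((1+t)/(1−t)) + 8 log(1−t²) + t²(3t² − 1)/(1−t²)² ]. -/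
open Real

/-!
With `x = t²`, the coefficient splits into partial fractions
`(l−1)l(l+2)/((l+1)(2l+1)) = l/2 − 1/4 − 2/(l+1) + (9/4)/(2l+1)`, and the four resulting
series are the classical expansions of `x/(1−x)²`, `1/(1−x)`, `−log(1−x)` and
`log((1+t)/(1−t))`. The coefficient vanishes at `l = 0, 1`, so the sum may start at `l = 0`.
-/

lemma coeff_eq_partialFractions {l : ℝ} (hl : 0 ≤ l) :
    (l - 1) * l * (l + 2) / ((l + 1) * (2 * l + 1)) =
      l / 2 - 1 / 4 - 2 / (l + 1) + 9 / 4 / (2 * l + 1) := by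
  have h₁ : l + 1 ≠ 0 := by positivity
  have h₂ : 2 * l + 1 ≠ 0 := by positivity
  field_simp
  ring

section Series

variable {t : ℝ}

lemma abs_sq_lt_one_of_abs_lt_one (ht : |t| < 1) : |t ^ 2| < 1 := by
  rw [abs_pow]
  exact pow_lt_one₀ (abs_nonneg t) ht two_ne_zero

lemma hasSum_nat_mul_pow_two_mul_add_two (ht : |t| < 1) :
    HasSum (fun l : ℕ => (l : ℝ) * t ^ (2 * l + 2)) (t ^ 4 / (1 - t ^ 2) ^ 2) := by
  have hx := abs_sq_lt_one_of_abs_lt_one ht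
  rw [show t ^ 4 / (1 - t ^ 2) ^ 2 = t ^ 2 * (t ^ 2 / (1 - t ^ 2) ^ 2) by ring]
  refine ((hasSum_coe_mul_geometric_of_norm_lt_one hx).mul_left (t ^ 2)).congr_fun fun l => ?_
  ring

lemma hasSum_pow_two_mul_add_two (ht : |t| < 1) :
    HasSum (fun l : ℕ => t ^ (2 * l + 2)) (t ^ 2 / (1 - t ^ 2)) := by
  have hx := abs_sq_lt_one_of_abs_lt_one ht
  refine ((hasSum_geometric_of_norm_lt_one hx).mul_left (t ^ 2)).congr_fun fun l => ?_
  ring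

lemma hasSum_pow_two_mul_add_two_div_succ (ht : |t| < 1) :
    HasSum (fun l : ℕ => t ^ (2 * l + 2) / (l + 1)) (-log (1 - t ^ 2)) := by
  have hx := abs_sq_lt_one_of_abs_lt_one ht
  refine (hasSum_pow_div_log_of_abs_lt_one hx).congr_fun fun l => ?_
  ring

lemma hasSum_pow_two_mul_add_two_div_two_mul_add_one (ht : |t| < 1) :
    HasSum (fun l : ℕ => t ^ (2 * l + 2) / (2 * l + 1)) (t / 2 * log ((1 + t) / (1 - t))) := by
  obtain ⟨hlt, hgt⟩ := abs_lt.mp ht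
  rw [log_div (by linarith) (by linarith)]
  refine ((hasSum_log_sub_log_of_abs_lt_one ht).mul_left (t / 2)).congr_fun fun l => ?_
  ring

lemma hasSum_coeff_mul_pow (ht : |t| < 1) :
    HasSum (fun l : ℕ =>
        ((l : ℝ) - 1) * l * (l + 2) / ((l + 1) * (2 * l + 1)) * t ^ (2 * l + 2))
      (1 / 4 * (9 / 2 * t * log ((1 + t) / (1 - t)) + 8 * log (1 - t ^ 2)
        + t ^ 2 * (3 * t ^ 2 - 1) / (1 - t ^ 2) ^ 2)) := by
  have hx : 1 - t ^ 2 ≠ 0 := (sub_pos.mpr ((sq_lt_one_iff_abs_lt_one t).mpr ht)).ne'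
  have hvalue : 1 / 4 * (9 / 2 * t * log ((1 + t) / (1 - t)) + 8 * log (1 - t ^ 2)
        + t ^ 2 * (3 * t ^ 2 - 1) / (1 - t ^ 2) ^ 2) =
      t ^ 4 / (1 - t ^ 2) ^ 2 / 2 - t ^ 2 / (1 - t ^ 2) / 4 - 2 * -log (1 - t ^ 2)
        + 9 / 4 * (t / 2 * log ((1 + t) / (1 - t))) := by
    field_simp
    ring
  rw [hvalue]
  refine ((((hasSum_nat_mul_pow_two_mul_add_two ht).div_const 2).sub
    ((hasSum_pow_two_mul_add_two ht).div_const 4)).sub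
    ((hasSum_pow_two_mul_add_two_div_succ ht).mul_left 2)).add
    ((hasSum_pow_two_mul_add_two_div_two_mul_add_one ht).mul_left (9 / 4))
    |>.congr_fun fun l => ?_
  rw [coeff_eq_partialFractions l.cast_nonneg]
  ring

end Series

/-- For `t ∈ (0,1)`, the series `Σ_{l≥2} ((l−1) l (l+2))/((l+1)(2l+1)) t^{2l+2}`
converges (here reindexed by `l = n + 2`, `n : ℕ`) and equals
`(1/4)[(9/2) t log((1+t)/(1−t)) + 8 log(1−t²) + t²(3t² − 1)/(1−t²)²]`. -/
theorem stmt8 (t : ℝ) (ht0 : 0 < t) (ht1 : t < 1) :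
    Summable (fun n : ℕ =>
      ((((n : ℝ) + 2) - 1) * ((n : ℝ) + 2) * (((n : ℝ) + 2) + 2)) /
        ((((n : ℝ) + 2) + 1) * (2 * ((n : ℝ) + 2) + 1)) * t ^ (2 * (n + 2) + 2)) ∧
    ∑' n : ℕ,
        ((((n : ℝ) + 2) - 1) * ((n : ℝ) + 2) * (((n : ℝ) + 2) + 2)) /
          ((((n : ℝ) + 2) + 1) * (2 * ((n : ℝ) + 2) + 1)) * t ^ (2 * (n + 2) + 2) =
      (1 / 4) * ((9 / 2) * t * Real.log ((1 + t) / (1 - t))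
        + 8 * Real.log (1 - t ^ 2)
        + t ^ 2 * (3 * t ^ 2 - 1) / (1 - t ^ 2) ^ 2) := by
  have ht : |t| < 1 := abs_lt.mpr ⟨by linarith, ht1⟩
  have hshift := (hasSum_nat_add_iff' 2).mpr (hasSum_coeff_mul_pow ht)
  simp only [Finset.sum_range_succ, Finset.sum_range_zero, Nat.cast_zero, Nat.cast_one,
    Nat.cast_add, Nat.cast_ofNat, sub_self, zero_mul, mul_zero, zero_div, add_zero,
    sub_zero] at hshift
  exact ⟨hshift.summable, hshift.tsum_eq⟩
end

section
/- Define g₁ : (0,1) → ℝ by g₁(r) = 64π + 32π/(1−r²) − 48π r^{−1} log((1+r)/(1−r)) − 128π log(1−r²). Then g₁ is strictly increasing on (0,1), g₁(r) → 0 as r → 0⁺, and g₁(r) → +∞ as r → 1⁻. In particular, the radial function G₁(ξ) = g₁(|ξ|) on {ξ ∈ ℝ³ : 0 < |ξ| < 1} is strictly increasing in radial directions, i.e. ⟨ξ, ∇G₁(ξ)⟩ > 0 for all 0 < |ξ| < 1. -/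
open Real Filter

/-- The radial profile of the leading-order reduced Willmore energy of on-center
coordinate spheres in Schwarzschild of mass 2. -/
noncomputable def g1 (r : ℝ) : ℝ :=
  64 * π + 32 * π / (1 - r ^ 2) - 48 * π * r⁻¹ * Real.log ((1 + r) / (1 - r))
    - 128 * π * Real.log (1 - r ^ 2)

/-!
Write `L(r) = log ((1 + r) / (1 - r))`, so that `L' = 2 / (1 - r²)`. The first two terms of the
power series `L(r) = 2 ∑ r^(2k+1)/(2k+1)` give `L(r) ≥ 2r + 2r³/3`, and after this substitution
`g₁'` is a sum of positive terms. At `0⁺`, `L(r)/r → L'(0) = 2`, so `g₁ → 64π + 32π - 96π = 0`.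
Near `1⁻`, writing `L = 2 log(1 + r) - log(1 - r²)` and using `log(1 + r) ≤ r` shows
`g₁(r) ≥ 32π/(1-r²) - 32π`. Finally the radial derivative of `ξ ↦ g₁(|ξ|)` is `|ξ| g₁'(|ξ|)`.
-/

open Finset in
theorem sum_range_le_log_one_add_div_one_sub {x : ℝ} (hx₀ : 0 ≤ x) (hx₁ : x < 1) (n : ℕ) :
    ∑ k ∈ range n, 2 * (1 / (2 * k + 1)) * x ^ (2 * k + 1) ≤ log ((1 + x) / (1 - x)) := by
  rw [log_div (by linarith) (by linarith)]
  exact sum_le_hasSum _ (fun k _ ↦ by positivity)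
    (hasSum_log_sub_log_of_abs_lt_one (abs_lt.2 ⟨by linarith, hx₁⟩))

theorem hasDerivAt_log_one_add_div_one_sub {x : ℝ} (hx : |x| < 1) :
    HasDerivAt (fun t ↦ log ((1 + t) / (1 - t))) (2 / (1 - x ^ 2)) x := by
  obtain ⟨hx₀, hx₁⟩ := abs_lt.1 hx
  have hp : 1 + x ≠ 0 := by linarith
  have hm : 1 - x ≠ 0 := by linarith
  have := (((hasDerivAt_id x).const_add 1).div ((hasDerivAt_id x).const_sub 1) hm).log
    (div_ne_zero hp hm)
  refine this.congr_deriv ?_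
  simp only [id, Pi.div_apply]
  rw [show 1 - x ^ 2 = (1 + x) * (1 - x) by ring]
  field_simp
  ring

noncomputable def g1Deriv (r : ℝ) : ℝ :=
  64 * π * r / (1 - r ^ 2) ^ 2 + 48 * π * log ((1 + r) / (1 - r)) / r ^ 2
    - 96 * π / (r * (1 - r ^ 2)) + 256 * π * r / (1 - r ^ 2)

theorem hasDerivAt_g1 {r : ℝ} (hr₀ : 0 < r) (hr₁ : r < 1) : HasDerivAt g1 (g1Deriv r) r := by
  have hu : 1 - r ^ 2 ≠ 0 := by nlinarith
  have hsq : HasDerivAt (fun t : ℝ ↦ 1 - t ^ 2) (-(2 * r)) r := by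
    simpa using (hasDerivAt_pow 2 r).const_sub 1
  have := (((hasDerivAt_const r (64 * π)).add ((hasDerivAt_const r (32 * π)).div hsq hu)).sub
    (((hasDerivAt_inv hr₀.ne').const_mul (48 * π)).mul
      (hasDerivAt_log_one_add_div_one_sub (abs_lt.2 ⟨by linarith, hr₁⟩)))).sub
    ((hsq.log hu).const_mul (128 * π))
  refine this.congr_deriv ?_
  unfold g1Deriv
  field_simp
  ring

theorem g1Deriv_pos {r : ℝ} (hr₀ : 0 < r) (hr₁ : r < 1) : 0 < g1Deriv r := by
  have hu : 0 < 1 - r ^ 2 := by nlinarith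
  have hlog : 2 * r + 2 * r ^ 3 / 3 ≤ log ((1 + r) / (1 - r)) := by
    have := sum_range_le_log_one_add_div_one_sub hr₀.le hr₁ 2
    norm_num [Finset.sum_range_succ] at this
    linarith
  have : g1Deriv r = 48 * π * (log ((1 + r) / (1 - r)) - (2 * r + 2 * r ^ 3 / 3)) / r ^ 2
      + 64 * π * r / (1 - r ^ 2) ^ 2 + 32 * π * r + 160 * π * r / (1 - r ^ 2) := by
    unfold g1Deriv
    field_simp
    ring
  rw [this]
  have := sub_nonneg.2 hlog
  positivity

theorem strictMonoOn_g1 : StrictMonoOn g1 (Set.Ioo 0 1) :=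
  strictMonoOn_of_deriv_pos (convex_Ioo 0 1)
    (fun r hr ↦ (hasDerivAt_g1 hr.1 hr.2).continuousAt.continuousWithinAt)
    (fun r hr ↦ by
      rw [interior_Ioo] at hr
      rw [(hasDerivAt_g1 hr.1 hr.2).deriv]
      exact g1Deriv_pos hr.1 hr.2)

theorem tendsto_inv_mul_log_one_add_div_one_sub :
    Tendsto (fun r : ℝ ↦ r⁻¹ * log ((1 + r) / (1 - r))) (nhdsWithin 0 (Set.Ioi 0)) (nhds 2) := by
  have := (hasDerivAt_log_one_add_div_one_sub (x := 0) (by norm_num)).tendsto_slope_zero_right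
  simpa using this

theorem tendsto_g1_nhdsGT_zero : Tendsto g1 (nhdsWithin 0 (Set.Ioi 0)) (nhds 0) := by
  have hcont : ContinuousAt
      (fun r : ℝ ↦ 64 * π + 32 * π / (1 - r ^ 2) - 128 * π * log (1 - r ^ 2)) 0 := by
    fun_prop (disch := norm_num)
  have := (hcont.tendsto.mono_left nhdsWithin_le_nhds).sub
    (tendsto_inv_mul_log_one_add_div_one_sub.const_mul (48 * π))
  convert this using 2
  · simp only [g1]; ring
  · norm_num; ring

theorem le_g1 {r : ℝ} (hr₀ : 1 / 2 ≤ r) (hr₁ : r < 1) : 32 * π / (1 - r ^ 2) - 32 * π ≤ g1 r := by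
  have hp : 0 < 1 + r := by linarith
  have hm : 0 < 1 - r := by linarith
  have hu : 0 < 1 - r ^ 2 := by nlinarith
  have hsplit : log ((1 + r) / (1 - r)) = 2 * log (1 + r) - log (1 - r ^ 2) := by
    rw [show (1 + r) / (1 - r) = (1 + r) ^ 2 / (1 - r ^ 2) by field_simp; ring,
      log_div (by positivity) hu.ne', log_pow]
    norm_num
  have hlog_le : r⁻¹ * log (1 + r) ≤ 1 := by
    rw [inv_mul_le_iff₀ (by linarith), mul_one]
    linarith [log_le_sub_one_of_pos hp]
  have hinv : r⁻¹ ≤ 2 := by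
    rw [inv_le_comm₀ (by linarith) two_pos]
    linarith
  have hlog_nonpos : log (1 - r ^ 2) ≤ 0 := log_nonpos hu.le (by nlinarith)
  have := mul_nonneg (mul_nonneg pi_pos.le (sub_nonneg.2 hinv)) (neg_nonneg.2 hlog_nonpos)
  rw [g1, hsplit]
  nlinarith [pi_pos]

theorem tendsto_one_sub_sq_nhdsLT_one :
    Tendsto (fun r : ℝ ↦ 1 - r ^ 2) (nhdsWithin 1 (Set.Iio 1)) (nhdsWithin 0 (Set.Ioi 0)) := by
  refine tendsto_nhdsWithin_iff.2 ⟨?_, ?_⟩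
  · have : ContinuousAt (fun r : ℝ ↦ 1 - r ^ 2) 1 := by fun_prop
    simpa using this.tendsto.mono_left nhdsWithin_le_nhds
  · filter_upwards [Ioo_mem_nhdsLT (show (-1 : ℝ) < 1 by norm_num)] with r hr
    simp only [Set.mem_Ioi]
    nlinarith [hr.1, hr.2]

theorem tendsto_g1_nhdsLT_one : Tendsto g1 (nhdsWithin 1 (Set.Iio 1)) atTop := by
  have := tendsto_atTop_add_const_right _ (-(32 * π))
    ((tendsto_inv_nhdsGT_zero.comp tendsto_one_sub_sq_nhdsLT_one).const_mul_atTop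
      (show 0 < 32 * π by positivity))
  refine tendsto_atTop_mono' _ ?_ this
  filter_upwards [Ico_mem_nhdsLT (show (1 / 2 : ℝ) < 1 by norm_num)] with r hr
  simpa [div_eq_mul_inv, sub_eq_add_neg] using le_g1 hr.1 hr.2

section

open scoped RealInnerProductSpace

variable {E : Type*} [NormedAddCommGroup E] [InnerProductSpace ℝ E]

theorem hasFDerivAt_norm {x : E} (hx : x ≠ 0) :
    HasFDerivAt (fun y : E ↦ ‖y‖) (‖x‖⁻¹ • innerSL ℝ x) x := by
  have := (hasStrictFDerivAt_norm_sq x).hasFDerivAt.sqrt (by positivity)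
  simp only [sqrt_sq (norm_nonneg _)] at this
  refine this.congr_fderiv ?_
  ext y
  simp only [smul_apply, coe_innerSL_apply, nsmul_eq_mul, Nat.cast_ofNat, smul_eq_mul]
  field_simp

theorem HasDerivAt.hasFDerivAt_comp_norm {f : ℝ → ℝ} {f' : ℝ} {x : E} (hf : HasDerivAt f f' ‖x‖)
    (hx : x ≠ 0) : HasFDerivAt (fun y ↦ f ‖y‖) ((f' / ‖x‖) • innerSL ℝ x) x := by
  refine (hf.comp_hasFDerivAt x (hasFDerivAt_norm hx)).congr_fderiv ?_
  rw [smul_smul, div_eq_mul_inv]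

theorem HasDerivAt.inner_self_gradient_comp_norm [CompleteSpace E] {f : ℝ → ℝ} {f' : ℝ} {x : E}
    (hf : HasDerivAt f f' ‖x‖) (hx : x ≠ 0) :
    ⟪x, gradient (fun y ↦ f ‖y‖) x⟫ = ‖x‖ * f' := by
  rw [real_inner_comm, gradient, InnerProductSpace.toDual_symm_apply,
    (hf.hasFDerivAt_comp_norm hx).fderiv]
  simp only [smul_apply, coe_innerSL_apply, real_inner_self_eq_norm_sq, smul_eq_mul]
  field_simp

end

/-- `g₁` is strictly increasing on `(0,1)`, tends to `0` at `0⁺` and to `+∞` at `1⁻`;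
consequently the radial function `G₁(ξ) = g₁(|ξ|)` is strictly increasing in radial
directions: `⟨ξ, ∇G₁(ξ)⟩ > 0` for `0 < |ξ| < 1`. -/
theorem stmt9 :
    StrictMonoOn g1 (Set.Ioo 0 1) ∧
    Tendsto g1 (nhdsWithin 0 (Set.Ioi 0)) (nhds 0) ∧
    Tendsto g1 (nhdsWithin 1 (Set.Iio 1)) atTop ∧
    ∀ ξ : EuclideanSpace ℝ (Fin 3), 0 < ‖ξ‖ → ‖ξ‖ < 1 →
      0 < (inner ℝ ξ (gradient (fun η : EuclideanSpace ℝ (Fin 3) => g1 ‖η‖) ξ) : ℝ) := by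
  refine ⟨strictMonoOn_g1, tendsto_g1_nhdsGT_zero, tendsto_g1_nhdsLT_one, fun ξ hξ₀ hξ₁ ↦ ?_⟩
  rw [(hasDerivAt_g1 hξ₀ hξ₁).inner_self_gradient_comp_norm (norm_pos_iff.1 hξ₀)]
  exact mul_pos hξ₀ (g1Deriv_pos hξ₀ hξ₁)
end

section
/- Let χ : ℝ³ → ℝ be defined by χ(y) = exp(−(1−|y|²)^{−1}) for |y| < 1 and χ(y) = 0 for |y| ≥ 1. Then for every y with |y| < 1, the Euclidean Laplacian of χ satisfies (Δ̄χ)(y) = 2 χ(y) (4|y|² + |y|⁴ − 3)/(1−|y|²)⁴. In particular, χ is strictly subharmonic on the spherical shell {y ∈ ℝ³ : √3/2 < |y| < 1}, i.e. (Δ̄χ)(y) > 0 there. -/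
/-!
The bump is radial, `χ(y) = φ(|y|²)` with `φ(s) = exp(-(1 - s)⁻¹)`, and for a radial function
`Δ[φ(|y|²)] = 4 |y|² φ''(|y|²) + 2 n φ'(|y|²)` in dimension `n`. Here `φ' = -φ / (1 - s)²` and
`φ'' = φ (2s - 1) / (1 - s)⁴`, so for `n = 3` the Laplacian is `2 φ (s² + 4s - 3) / (1 - s)⁴` at
`s = |y|²`, and `s² + 4s - 3 > 0` as soon as `s > 3/4`.
-/

open Real
open scoped Classical

noncomputable def bump (y : EuclideanSpace ℝ (Fin 3)) : ℝ :=
  if ‖y‖ < 1 then Real.exp (-(1 - ‖y‖ ^ 2)⁻¹) else 0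

open Filter Topology
open scoped RealInnerProductSpace

section Radial

variable {E : Type*} [NormedAddCommGroup E] [InnerProductSpace ℝ E]
  {φ φ' : ℝ → ℝ} {φ'' : ℝ} {y : E}

theorem fderiv_comp_norm_sq_apply_eventuallyEq
    (hφ : ∀ᶠ s in 𝓝 (‖y‖ ^ 2), HasDerivAt φ (φ' s) s) (e : E) :
    (fun z => fderiv ℝ (fun w => φ (‖w‖ ^ 2)) z e) =ᶠ[𝓝 y]
      fun z => φ' (‖z‖ ^ 2) * (2 * ⟪z, e⟫) := by
  have hcont : Tendsto (fun z : E => ‖z‖ ^ 2) (𝓝 y) (𝓝 (‖y‖ ^ 2)) :=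
    (continuous_norm.pow 2).tendsto y
  filter_upwards [hcont.eventually hφ] with z hz
  have hz' : HasFDerivAt (fun w => φ (‖w‖ ^ 2)) _ z :=
    hz.comp_hasFDerivAt z (hasStrictFDerivAt_norm_sq z).hasFDerivAt
  rw [hz'.fderiv]
  simp

theorem fderiv_fderiv_comp_norm_sq_apply
    (hφ : ∀ᶠ s in 𝓝 (‖y‖ ^ 2), HasDerivAt φ (φ' s) s) (hφ' : HasDerivAt φ' φ'' (‖y‖ ^ 2))
    (e : E) :
    fderiv ℝ (fun z => fderiv ℝ (fun w => φ (‖w‖ ^ 2)) z e) y e =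
      4 * φ'' * ⟪y, e⟫ ^ 2 + 2 * φ' (‖y‖ ^ 2) * ‖e‖ ^ 2 := by
  rw [(fderiv_comp_norm_sq_apply_eventuallyEq hφ e).fderiv_eq]
  have hinner : HasFDerivAt (fun z : E => 2 * ⟪z, e⟫) ((2 : ℝ) • innerSL ℝ e) y := by
    simpa only [innerSL_apply_apply, real_inner_comm e] using
      ((innerSL ℝ e).hasFDerivAt (x := y)).const_mul (2 : ℝ)
  have h : HasFDerivAt (fun z => φ' (‖z‖ ^ 2) * (2 * ⟪z, e⟫)) _ y :=
    (hφ'.comp_hasFDerivAt y (hasStrictFDerivAt_norm_sq y).hasFDerivAt).mul hinner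
  rw [h.fderiv]
  simp only [Function.comp_apply, add_apply, smul_apply,
    innerSL_apply_apply, real_inner_self_eq_norm_sq, smul_eq_mul, nsmul_eq_mul, Nat.cast_ofNat]
  ring

theorem sum_fderiv_fderiv_comp_norm_sq_apply {ι : Type*} [Fintype ι]
    (b : OrthonormalBasis ι ℝ E)
    (hφ : ∀ᶠ s in 𝓝 (‖y‖ ^ 2), HasDerivAt φ (φ' s) s) (hφ' : HasDerivAt φ' φ'' (‖y‖ ^ 2)) :
    ∑ i, fderiv ℝ (fun z => fderiv ℝ (fun w => φ (‖w‖ ^ 2)) z (b i)) y (b i) =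
      4 * φ'' * ‖y‖ ^ 2 + 2 * Fintype.card ι * φ' (‖y‖ ^ 2) := by
  simp only [fderiv_fderiv_comp_norm_sq_apply hφ hφ', b.norm_eq_one, Finset.sum_add_distrib,
    ← Finset.mul_sum, b.sum_sq_inner_left, one_pow, Finset.sum_const, Finset.card_univ,
    nsmul_eq_mul]
  ring

end Radial

noncomputable def bumpProfile (s : ℝ) : ℝ := exp (-(1 - s)⁻¹)

theorem hasDerivAt_bumpProfile {s : ℝ} (hs : s ≠ 1) :
    HasDerivAt bumpProfile (-bumpProfile s / (1 - s) ^ 2) s := by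
  have hs' : 1 - s ≠ 0 := sub_ne_zero.mpr hs.symm
  unfold bumpProfile
  convert (((hasDerivAt_id' s).const_sub 1).fun_inv hs').fun_neg.exp using 1
  field_simp

theorem hasDerivAt_neg_bumpProfile_div_one_sub_sq {s : ℝ} (hs : s ≠ 1) :
    HasDerivAt (fun t => -bumpProfile t / (1 - t) ^ 2)
      (bumpProfile s * (2 * s - 1) / (1 - s) ^ 4) s := by
  have hs' : 1 - s ≠ 0 := sub_ne_zero.mpr hs.symm
  have h : HasDerivAt (fun t => -bumpProfile t / (1 - t) ^ 2) _ s :=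
    (hasDerivAt_bumpProfile hs).fun_neg.div (((hasDerivAt_id' s).const_sub 1).pow 2)
      (pow_ne_zero 2 hs')
  convert h using 1
  simp only [Nat.cast_ofNat, Nat.add_one_sub_one, pow_one]
  field_simp
  ring

theorem bump_eventuallyEq_bumpProfile {y : EuclideanSpace ℝ (Fin 3)} (hy : ‖y‖ < 1) :
    bump =ᶠ[𝓝 y] fun z => bumpProfile (‖z‖ ^ 2) := by
  filter_upwards [(isOpen_lt continuous_norm continuous_const).mem_nhds hy] with z hz
  simp [bump, bumpProfile, hz]

theorem sum_fderiv_fderiv_bump {y : EuclideanSpace ℝ (Fin 3)} (hy : ‖y‖ < 1) :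
    ∑ i : Fin 3,
        fderiv ℝ (fun z => fderiv ℝ bump z (EuclideanSpace.single i 1)) y
          (EuclideanSpace.single i 1) =
      2 * bump y * (4 * ‖y‖ ^ 2 + ‖y‖ ^ 4 - 3) / (1 - ‖y‖ ^ 2) ^ 4 := by
  have hr : ‖y‖ ^ 2 < 1 := pow_lt_one₀ (norm_nonneg y) hy two_ne_zero
  have hlocal (e : EuclideanSpace ℝ (Fin 3)) :
      fderiv ℝ (fun z => fderiv ℝ bump z e) y =
        fderiv ℝ (fun z => fderiv ℝ (fun w => bumpProfile (‖w‖ ^ 2)) z e) y :=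
    Filter.EventuallyEq.fderiv_eq <| by
      filter_upwards [(bump_eventuallyEq_bumpProfile hy).fderiv (𝕜 := ℝ)] with z hz
      rw [hz]
  have hφ : ∀ᶠ s in 𝓝 (‖y‖ ^ 2), HasDerivAt bumpProfile (-bumpProfile s / (1 - s) ^ 2) s :=
    (eventually_ne_nhds hr.ne).mono fun s hs => hasDerivAt_bumpProfile hs
  have hradial := sum_fderiv_fderiv_comp_norm_sq_apply (EuclideanSpace.basisFun (Fin 3) ℝ) hφ
    (hasDerivAt_neg_bumpProfile_div_one_sub_sq hr.ne)
  simp only [EuclideanSpace.basisFun_apply] at hradial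
  simp only [hlocal]
  rw [hradial, (bump_eventuallyEq_bumpProfile hy).eq_of_nhds]
  have : 1 - ‖y‖ ^ 2 ≠ 0 := (sub_pos.mpr hr).ne'
  simp only [Fintype.card_fin, Nat.cast_ofNat]
  field_simp
  ring

/-- Formula for the Euclidean Laplacian of the standard bump function on the open unit
ball, and its strict subharmonicity on the shell `√3/2 < |y| < 1`. -/
theorem stmt12 :
    (∀ y : EuclideanSpace ℝ (Fin 3), ‖y‖ < 1 →
      ∑ i : Fin 3,
          fderiv ℝ (fun z : EuclideanSpace ℝ (Fin 3) =>
            fderiv ℝ bump z (EuclideanSpace.single i 1)) y (EuclideanSpace.single i 1) =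
        2 * bump y * (4 * ‖y‖ ^ 2 + ‖y‖ ^ 4 - 3) / (1 - ‖y‖ ^ 2) ^ 4) ∧
    ∀ y : EuclideanSpace ℝ (Fin 3), Real.sqrt 3 / 2 < ‖y‖ → ‖y‖ < 1 →
      0 < ∑ i : Fin 3,
          fderiv ℝ (fun z : EuclideanSpace ℝ (Fin 3) =>
            fderiv ℝ bump z (EuclideanSpace.single i 1)) y (EuclideanSpace.single i 1) := by
  refine ⟨fun y hy => sum_fderiv_fderiv_bump hy, fun y hlo hy => ?_⟩
  rw [sum_fderiv_fderiv_bump hy]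
  have hbump : 0 < bump y := by simp only [bump, if_pos hy]; positivity
  have hr : 3 / 4 < ‖y‖ ^ 2 := by
    calc (3 : ℝ) / 4 = (√3 / 2) ^ 2 := by rw [div_pow, sq_sqrt (by norm_num)]; norm_num
      _ < ‖y‖ ^ 2 := by gcongr
  have hr1 : ‖y‖ ^ 2 < 1 := pow_lt_one₀ (norm_nonneg y) hy two_ne_zero
  have hnum : 0 < 4 * ‖y‖ ^ 2 + ‖y‖ ^ 4 - 3 := by nlinarith
  have : 0 < 1 - ‖y‖ ^ 2 := sub_pos.mpr hr1
  positivity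
end

section
/- Let a ∈ (0,1), let ζ ∈ (0,π), and let θ ∈ (0,π/2) satisfy cos θ > a and sin θ (cos ζ + a) = sin ζ (cos θ − a). Set t = sin ζ / sin θ. Then t > 1 and (1 + a cos ζ) cos θ ≥ t cos ζ (1 − a cos θ). -/
open Real

/-!
With `t = sin ζ / sin θ` the hypothesis says `t • (sin θ, cos θ - a) = (sin ζ, cos ζ + a)`: the ray
from the origin through the point `P` of the unit circle about `(0, -a)` meets the unit circle
about `(0, a)` at `t • P`. Comparing `‖t • P - (0, a)‖² = 1 = ‖P + (0, a)‖²` gives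
`(t - 1) ‖P‖² = 2 a (cos θ - a) > 0`, hence `t > 1`. Eliminating `t²` with this linear relation,
`‖P‖²` times the gap in the second inequality equals `a (1 - a²) sin² θ (1 + t) ≥ 0`.
-/

section RayScale

variable {s c S z a t : ℝ}

theorem ray_scale_relation (hθ : s ^ 2 + c ^ 2 = 1) (hζ : S ^ 2 + z ^ 2 = 1)
    (hS : t * s = S) (hz : t * (c - a) = z + a) (ht : -1 < t) :
    (s ^ 2 + (c - a) ^ 2) * (t - 1) = 2 * a * (c - a) := by
  have h : (t + 1) * ((s ^ 2 + (c - a) ^ 2) * (t - 1) - 2 * a * (c - a)) = 0 := by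
    linear_combination hζ - hθ + (t * s + S) * hS + (t * (c - a) + z - a) * hz
  exact sub_eq_zero.mp ((mul_eq_zero.mp h).resolve_left (by linarith))

theorem one_lt_of_ray_scale (hθ : s ^ 2 + c ^ 2 = 1) (hζ : S ^ 2 + z ^ 2 = 1)
    (hS : t * s = S) (hz : t * (c - a) = z + a) (ht : -1 < t) (ha : 0 < a) (hac : a < c) :
    1 < t := by
  have hrel := ray_scale_relation hθ hζ hS hz ht
  have hpos : 0 < (s ^ 2 + (c - a) ^ 2) * (t - 1) := by
    rw [hrel]
    exact mul_pos (by positivity) (sub_pos.mpr hac)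
  linarith [pos_of_mul_pos_right hpos (by positivity)]

theorem ray_scale_gap_identity (hθ : s ^ 2 + c ^ 2 = 1) (hz : t * (c - a) = z + a)
    (hrel : (s ^ 2 + (c - a) ^ 2) * (t - 1) = 2 * a * (c - a)) :
    (s ^ 2 + (c - a) ^ 2) * ((1 + a * z) * c - t * z * (1 - a * c)) =
      a * (1 - a ^ 2) * s ^ 2 * (1 + t) := by
  obtain rfl : z = t * (c - a) - a := by linarith
  linear_combination ((c - a) * (a * (c - a) - (1 - a ^ 2)) * t - (c - a) * (s ^ 2 + (c - a) * c)) * hrel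
    - (1 - t) * (c - a) * (s ^ 2 + c * (c - a)) * hθ

theorem ray_scale_mul_cos_le (hθ : s ^ 2 + c ^ 2 = 1) (hζ : S ^ 2 + z ^ 2 = 1)
    (hS : t * s = S) (hz : t * (c - a) = z + a) (ht : -1 < t)
    (ha0 : 0 ≤ a) (ha1 : a ≤ 1) (hac : a < c) :
    t * z * (1 - a * c) ≤ (1 + a * z) * c := by
  have hgap := ray_scale_gap_identity hθ hz (ray_scale_relation hθ hζ hS hz ht)
  have hrhs : 0 ≤ a * (1 - a ^ 2) * s ^ 2 * (1 + t) := by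
    have : 0 ≤ 1 - a ^ 2 := by nlinarith
    have : 0 ≤ 1 + t := by linarith
    positivity
  rw [← hgap] at hrhs
  have hK : 0 < s ^ 2 + (c - a) ^ 2 := by
    have := sub_pos.mpr hac
    positivity
  linarith [nonneg_of_mul_nonneg_right hrhs hK]

end RayScale

/-- The elementary trigonometric comparison underlying the reflection argument:
if `a ∈ (0,1)`, `ζ ∈ (0,π)`, `θ ∈ (0,π/2)` with `cos θ > a` and
`sin θ (cos ζ + a) = sin ζ (cos θ − a)`, then `t = sin ζ / sin θ > 1` and
`(1 + a cos ζ) cos θ ≥ t cos ζ (1 − a cos θ)`. -/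
theorem stmt13 (a ζ θ : ℝ) (ha0 : 0 < a) (ha1 : a < 1)
    (hζ0 : 0 < ζ) (hζπ : ζ < π) (hθ0 : 0 < θ) (hθ : θ < π / 2)
    (hcos : a < Real.cos θ)
    (heq : Real.sin θ * (Real.cos ζ + a) = Real.sin ζ * (Real.cos θ - a)) :
    1 < Real.sin ζ / Real.sin θ ∧
    (Real.sin ζ / Real.sin θ) * Real.cos ζ * (1 - a * Real.cos θ) ≤
      (1 + a * Real.cos ζ) * Real.cos θ := by
  have hsθ : 0 < sin θ := sin_pos_of_pos_of_lt_pi hθ0 (by linarith [pi_pos])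
  have hsζ : 0 < sin ζ := sin_pos_of_pos_of_lt_pi hζ0 hζπ
  have ht : -1 < sin ζ / sin θ := by linarith [div_pos hsζ hsθ]
  have hS : sin ζ / sin θ * sin θ = sin ζ := div_mul_cancel₀ _ hsθ.ne'
  have hz : sin ζ / sin θ * (cos θ - a) = cos ζ + a := by
    rw [div_mul_eq_mul_div, div_eq_iff hsθ.ne']
    linarith
  exact ⟨one_lt_of_ray_scale (sin_sq_add_cos_sq θ) (sin_sq_add_cos_sq ζ) hS hz ht ha0 hcos,
    ray_scale_mul_cos_le (sin_sq_add_cos_sq θ) (sin_sq_add_cos_sq ζ) hS hz ht ha0.le ha1.le hcos⟩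
end

section
/- Let r₀ > 0 and let u : ℝ³ → ℝ be continuously differentiable on {x ∈ ℝ³ : |x| ≥ r₀} with u(x) → 0 as |x| → ∞. Suppose there is a bounded function ε : [r₀,∞) → [0,∞) such that ⟨x, ∇u(x)⟩ ≤ ε(|x|) |x|^{−2} for all x with |x| ≥ r₀. Then for every x with |x| ≥ r₀ one has u(x) ≥ −(1/(2|x|²)) · sup_{s ≥ |x|} ε(s). -/
/-!
Along the ray `t ↦ t • x / ‖x‖` put `M = sup_{s ≥ ‖x‖} ε(s)`. The radial bound gives
`t φ'(t) ≤ M / t²` for `φ(t) = u(t • x / ‖x‖)`, so `φ(t) + M / (2 t²)` is nonincreasing on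
`[‖x‖, ∞)`; it tends to `0`, hence is nonnegative at `t = ‖x‖`.
-/

open Filter Set Topology Gradient RealInnerProductSpace

theorem neg_div_two_sq_le_of_mul_deriv_le {φ φ' : ℝ → ℝ} {a M : ℝ} (ha : 0 < a)
    (hcont : ContinuousOn φ (Ici a)) (hderiv : ∀ t, a < t → HasDerivAt φ (φ' t) t)
    (hbound : ∀ t, a < t → t * φ' t ≤ M / t ^ 2) (hlim : Tendsto φ atTop (𝓝 0)) :
    -(M / (2 * a ^ 2)) ≤ φ a := by
  set g : ℝ → ℝ := fun t => φ t + M / 2 * (t ^ 2)⁻¹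
  have hg_deriv : ∀ t, a < t → HasDerivAt g (φ' t - M / t ^ 3) t := by
    intro t ht
    have ht0 : t ≠ 0 := (ha.trans ht).ne'
    refine ((hderiv t ht).add (((hasDerivAt_pow 2 t).inv (by positivity)).const_mul
      (M / 2))).congr_deriv ?_
    field_simp
    ring
  have hg_anti : AntitoneOn g (Ici a) := by
    refine antitoneOn_of_hasDerivWithinAt_nonpos (convex_Ici a) ?_
      (fun t ht => (hg_deriv t (by simpa using ht)).hasDerivWithinAt) fun t ht => ?_
    · refine hcont.add (continuousOn_const.mul (ContinuousOn.inv₀ (by fun_prop) fun t ht => ?_))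
      have : 0 < t := ha.trans_le ht
      positivity
    · rw [interior_Ici] at ht
      have ht0 : 0 < t := ha.trans ht
      have : φ' t ≤ M / t ^ 3 := by
        rw [le_div_iff₀ (by positivity)]
        have hbt := hbound t ht
        rw [le_div_iff₀ (by positivity)] at hbt
        nlinarith
      linarith
  have hg_lim : Tendsto g atTop (𝓝 0) := by
    simpa using hlim.add ((tendsto_pow_atTop two_ne_zero).inv_tendsto_atTop.const_mul (M / 2))
  have hga : 0 ≤ g a := le_of_tendsto hg_lim <| (eventually_ge_atTop a).mono fun t ht =>
    hg_anti self_mem_Ici ht ht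
  simp only [g] at hga
  field_simp at hga ⊢
  linarith

theorem neg_div_two_norm_sq_le_of_inner_gradient_le {E : Type*} [NormedAddCommGroup E]
    [InnerProductSpace ℝ E] [CompleteSpace E] {u : E → ℝ} {x : E} {M : ℝ} (hx : x ≠ 0)
    (hcont : ContinuousOn u {y | ‖x‖ ≤ ‖y‖}) (hdiff : ∀ y : E, ‖x‖ < ‖y‖ → DifferentiableAt ℝ u y)
    (hgrad : ∀ y : E, ‖x‖ < ‖y‖ → ⟪y, ∇ u y⟫ ≤ M / ‖y‖ ^ 2)
    (hlim : Tendsto u (comap norm atTop) (𝓝 0)) :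
    -(M / (2 * ‖x‖ ^ 2)) ≤ u x := by
  have hx0 : 0 < ‖x‖ := norm_pos_iff.2 hx
  set v : E := ‖x‖⁻¹ • x
  have hv : ‖v‖ = 1 := by simp [v, norm_smul, hx0.ne']
  have hnorm : ∀ t, 0 ≤ t → ‖t • v‖ = t := fun t ht => by
    rw [norm_smul, hv, mul_one, Real.norm_of_nonneg ht]
  have hderiv : ∀ t, ‖x‖ < t →
      HasDerivAt (fun s : ℝ => u (s • v)) (fderiv ℝ u (t • v) v) t := fun t ht =>
    (hdiff _ (by rwa [hnorm t (hx0.trans ht).le])).hasFDerivAt.comp_hasDerivAt t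
      (by simpa using (hasDerivAt_id t).smul_const v)
  suffices -(M / (2 * ‖x‖ ^ 2)) ≤ u (‖x‖ • v) by simpa [v, smul_smul, hx0.ne'] using this
  refine neg_div_two_sq_le_of_mul_deriv_le hx0 ?_ hderiv (fun t ht => ?_) ?_
  · exact hcont.comp (by fun_prop) fun t ht => by simpa [hnorm t (hx0.trans_le ht).le] using ht
  · have hnt := hnorm t (hx0.trans ht).le
    have := hgrad (t • v) (by rwa [hnt])
    rwa [inner_gradient_right, conj_trivial, map_smul, smul_eq_mul, hnt] at this
  · refine hlim.comp (tendsto_comap_iff.2 ?_)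
    exact tendsto_id.congr' <| (eventually_ge_atTop 0).mono fun t ht => (hnorm t ht).symm

theorem stmt14_general (r₀ : ℝ) (hr₀ : 0 < r₀) (u : EuclideanSpace ℝ (Fin 3) → ℝ)
    (hu : ContDiffOn ℝ 1 u {x : EuclideanSpace ℝ (Fin 3) | r₀ ≤ ‖x‖})
    (hulim : Tendsto u (Filter.comap (fun x : EuclideanSpace ℝ (Fin 3) => ‖x‖) atTop)
      (nhds 0))
    (ε : ℝ → ℝ)
    (B : ℝ) (hεB : ∀ s, r₀ ≤ s → ε s ≤ B)
    (hgrad : ∀ x : EuclideanSpace ℝ (Fin 3), r₀ ≤ ‖x‖ →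
      (inner ℝ x (gradient u x) : ℝ) ≤ ε ‖x‖ * (‖x‖ ^ 2)⁻¹) :
    ∀ x : EuclideanSpace ℝ (Fin 3), r₀ ≤ ‖x‖ →
      -(1 / (2 * ‖x‖ ^ 2)) * sSup (ε '' Set.Ici ‖x‖) ≤ u x := by
  intro x hx
  have hbdd : BddAbove (ε '' Ici ‖x‖) :=
    ⟨B, forall_mem_image.2 fun s hs => hεB s (hx.trans hs)⟩
  have hdiff : ∀ y : EuclideanSpace ℝ (Fin 3), ‖x‖ < ‖y‖ → DifferentiableAt ℝ u y :=
    fun y hy => (hu.contDiffAt <| mem_of_superset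
      ((isOpen_lt continuous_const continuous_norm).mem_nhds hy)
      fun z (hz : ‖x‖ < ‖z‖) => hx.trans hz.le).differentiableAt one_ne_zero
  have hbound : ∀ y : EuclideanSpace ℝ (Fin 3), ‖x‖ < ‖y‖ →
      ⟪y, ∇ u y⟫ ≤ sSup (ε '' Ici ‖x‖) / ‖y‖ ^ 2 := fun y hy =>
    (hgrad y (hx.trans hy.le)).trans <| by
      rw [← div_eq_mul_inv]
      gcongr
      exact le_csSup hbdd (mem_image_of_mem ε hy.le)
  convert neg_div_two_norm_sq_le_of_inner_gradient_le (norm_pos_iff.1 (hr₀.trans_le hx))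
    (hu.continuousOn.mono fun y hy => hx.trans hy) hdiff hbound hulim using 1
  ring

/-- If `u` is `C¹` on `{|x| ≥ r₀}`, tends to `0` at infinity, and its radial derivative
satisfies `⟨x, ∇u(x)⟩ ≤ ε(|x|)|x|⁻²` with `ε ≥ 0` bounded, then
`u(x) ≥ −(1/(2|x|²)) sup_{s ≥ |x|} ε(s)` for all `|x| ≥ r₀`. -/
theorem stmt14 (r₀ : ℝ) (hr₀ : 0 < r₀) (u : EuclideanSpace ℝ (Fin 3) → ℝ)
    (hu : ContDiffOn ℝ 1 u {x : EuclideanSpace ℝ (Fin 3) | r₀ ≤ ‖x‖})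
    (hulim : Tendsto u (Filter.comap (fun x : EuclideanSpace ℝ (Fin 3) => ‖x‖) atTop)
      (nhds 0))
    (ε : ℝ → ℝ) (hε0 : ∀ s, r₀ ≤ s → 0 ≤ ε s)
    (B : ℝ) (hεB : ∀ s, r₀ ≤ s → ε s ≤ B)
    (hgrad : ∀ x : EuclideanSpace ℝ (Fin 3), r₀ ≤ ‖x‖ →
      (inner ℝ x (gradient u x) : ℝ) ≤ ε ‖x‖ * (‖x‖ ^ 2)⁻¹) :
    ∀ x : EuclideanSpace ℝ (Fin 3), r₀ ≤ ‖x‖ →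
      -(1 / (2 * ‖x‖ ^ 2)) * sSup (ε '' Set.Ici ‖x‖) ≤ u x :=
  stmt14_general r₀ hr₀ u hu hulim ε B hεB hgrad
end

section
/- Let h : ℝ³ → ℝ be twice continuously differentiable on {x ∈ ℝ³ : |x| ≥ 1}, and suppose there is a constant C > 0 such that the operator norm of the Hessian satisfies ‖D²h(x)‖ ≤ C |x|^{−6} for all |x| ≥ 1. If |x|⁴ h(x) → 0 as |x| → ∞, then |x|⁵ |∇h(x)| → 0 as |x| → ∞. -/
open Real Filter

/-!
Taylor's formula with a bound `M` on the Hessian over the ball `B(x, t)` gives, for every unit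
vector `v`, `t ‖Dh(x) v‖ ≤ ‖h(x + t v)‖ + ‖h(x)‖ + M t²`. Take `t = δ|x|` with `δ ≤ 1/2`: on that
ball `|z| ≥ |x|/2`, so `|h| ≲ o(|x|⁻⁴)` and `M ≲ C|x|⁻⁶`, whence
`|x|⁵ ‖Dh(x)‖ ≤ o(1)/δ + 2⁶ C δ`. Letting `|x| → ∞` and then `δ → 0` gives the claim.
-/

open Metric Set

theorem mul_inv_pow_le_of_half_le {a b c : ℝ} (n : ℕ) (hc : 0 ≤ c) (ha : 0 < a)
    (hab : a / 2 ≤ b) : c * (b ^ n)⁻¹ ≤ 2 ^ n * c * (a ^ n)⁻¹ :=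
  calc c * (b ^ n)⁻¹ ≤ c * ((a / 2) ^ n)⁻¹ := by gcongr
    _ = 2 ^ n * c * (a ^ n)⁻¹ := by rw [div_pow, inv_div]; ring

variable {E F : Type*} [NormedAddCommGroup E]

theorem half_norm_le_of_mem_closedBall {x z : E} {δ : ℝ} (hδ : δ ≤ 1 / 2)
    (hz : z ∈ closedBall x (δ * ‖x‖)) : ‖x‖ / 2 ≤ ‖z‖ := by
  rw [mem_closedBall, dist_eq_norm, norm_sub_rev] at hz
  nlinarith [norm_sub_norm_le x z, norm_nonneg x]

theorem eventually_forall_mem_closedBall_mul_norm {P : E → Prop}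
    (hP : ∀ᶠ x in comap (‖·‖) atTop, P x) {δ : ℝ} (hδ : δ ≤ 1 / 2) :
    ∀ᶠ x in comap (‖·‖) atTop, ∀ z ∈ closedBall x (δ * ‖x‖), P z := by
  obtain ⟨R, hR⟩ := eventually_atTop.1 (eventually_comap.1 hP)
  filter_upwards [tendsto_comap.eventually (eventually_ge_atTop (2 * R))] with x hx z hz
  exact hR _ (by linarith [half_norm_le_of_mem_closedBall hδ hz]) z rfl

variable [NormedSpace ℝ E] [NormedAddCommGroup F] [NormedSpace ℝ F]

theorem norm_image_sub_sub_fderiv_le {f : E → F} {x y : E} {r M : ℝ}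
    (hf : ∀ z ∈ closedBall x r, ContDiffAt ℝ 2 f z)
    (hM : ∀ z ∈ closedBall x r, ‖fderiv ℝ (fderiv ℝ f) z‖ ≤ M) (hy : y ∈ closedBall x r) :
    ‖f y - f x - fderiv ℝ f x (y - x)‖ ≤ M * ‖y - x‖ ^ 2 := by
  set s := closedBall x ‖y - x‖
  have hs : s ⊆ closedBall x r := closedBall_subset_closedBall (by rwa [← dist_eq_norm])
  have hxs : x ∈ s := mem_closedBall_self (norm_nonneg _)
  have hys : y ∈ s := by rw [mem_closedBall, dist_eq_norm]
  have hM0 : 0 ≤ M := (norm_nonneg (fderiv ℝ (fderiv ℝ f) x)).trans (hM x (hs hxs))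
  have hLip : ∀ z ∈ s, ‖fderiv ℝ f z - fderiv ℝ f x‖ ≤ M * ‖y - x‖ := fun z hz =>
    ((convex_closedBall _ _).norm_image_sub_le_of_norm_fderiv_le
      (fun w hw => ((hf w (hs hw)).fderiv_right (m := 1) le_rfl).differentiableAt one_ne_zero)
      (fun w hw => hM w (hs hw)) hxs hz).trans
      (mul_le_mul_of_nonneg_left (by rwa [← dist_eq_norm]) hM0)
  calc ‖f y - f x - fderiv ℝ f x (y - x)‖ ≤ M * ‖y - x‖ * ‖y - x‖ :=
        (convex_closedBall _ _).norm_image_sub_le_of_norm_fderiv_le'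
          (fun w hw => (hf w (hs hw)).differentiableAt two_ne_zero) hLip hxs hys
    _ = M * ‖y - x‖ ^ 2 := by ring

theorem norm_fderiv_le_of_norm_le_of_norm_hessian_le {f : E → F} {x : E} {t A M : ℝ}
    (ht : 0 < t) (hf : ∀ z ∈ closedBall x t, ContDiffAt ℝ 2 f z)
    (hA : ∀ z ∈ closedBall x t, ‖f z‖ ≤ A)
    (hM : ∀ z ∈ closedBall x t, ‖fderiv ℝ (fderiv ℝ f) z‖ ≤ M) :
    ‖fderiv ℝ f x‖ ≤ 2 * A / t + M * t := by
  have hx : x ∈ closedBall x t := mem_closedBall_self ht.le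
  have hA0 : 0 ≤ A := (norm_nonneg _).trans (hA x hx)
  have hM0 : 0 ≤ M := (norm_nonneg (fderiv ℝ (fderiv ℝ f) x)).trans (hM x hx)
  refine ContinuousLinearMap.opNorm_le_of_unit_norm (by positivity) fun v hv => ?_
  set y := x + t • v
  have hyx : y - x = t • v := add_sub_cancel_left _ _
  have hy : y ∈ closedBall x t := by
    rw [mem_closedBall, dist_eq_norm, hyx, norm_smul, hv, mul_one, Real.norm_of_nonneg ht.le]
  have htaylor : ‖f y - f x - t • fderiv ℝ f x v‖ ≤ M * t ^ 2 := by
    simpa [hyx, norm_smul, hv, abs_of_pos ht] using norm_image_sub_sub_fderiv_le hf hM hy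
  have hdir : t * ‖fderiv ℝ f x v‖ ≤ 2 * A + M * t ^ 2 :=
    calc t * ‖fderiv ℝ f x v‖ = ‖f y - f x - (f y - f x - t • fderiv ℝ f x v)‖ := by
          simp [norm_smul, abs_of_pos ht]
      _ ≤ ‖f y‖ + ‖f x‖ + ‖f y - f x - t • fderiv ℝ f x v‖ :=
          (norm_sub_le _ _).trans (add_le_add_left (norm_sub_le _ _) _)
      _ ≤ 2 * A + M * t ^ 2 := by linarith [hA y hy, hA x hx]
  calc ‖fderiv ℝ f x v‖ = t * ‖fderiv ℝ f x v‖ / t := by field_simp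
    _ ≤ (2 * A + M * t ^ 2) / t := by gcongr
    _ = 2 * A / t + M * t := by field_simp

theorem norm_pow_succ_mul_norm_fderiv_le {f : E → F} {x : E} {k : ℕ} {C δ η : ℝ}
    (hx : 0 < ‖x‖) (hδ0 : 0 < δ) (hδ : δ ≤ 1 / 2)
    (hf : ∀ z ∈ closedBall x (δ * ‖x‖), ContDiffAt ℝ 2 f z)
    (hHess : ∀ z ∈ closedBall x (δ * ‖x‖),
      ‖fderiv ℝ (fderiv ℝ f) z‖ ≤ C * (‖z‖ ^ (k + 2))⁻¹)
    (hsmall : ∀ z ∈ closedBall x (δ * ‖x‖), ‖z‖ ^ k * ‖f z‖ ≤ η) :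
    ‖x‖ ^ (k + 1) * ‖fderiv ℝ f x‖ ≤ 2 ^ (k + 1) * η / δ + 2 ^ (k + 2) * C * δ := by
  set t := δ * ‖x‖
  have ht : 0 < t := by positivity
  have hxt : x ∈ closedBall x t := mem_closedBall_self ht.le
  have hhalf : ∀ z ∈ closedBall x t, ‖x‖ / 2 ≤ ‖z‖ := fun z hz =>
    half_norm_le_of_mem_closedBall hδ hz
  have hC : 0 ≤ C := (mul_nonneg_iff_of_pos_right (by positivity)).1
    ((norm_nonneg (fderiv ℝ (fderiv ℝ f) x)).trans (hHess x hxt))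
  have hη : 0 ≤ η := (by positivity : 0 ≤ ‖x‖ ^ k * ‖f x‖).trans (hsmall x hxt)
  have hA : ∀ z ∈ closedBall x t, ‖f z‖ ≤ 2 ^ k * η * (‖x‖ ^ k)⁻¹ := fun z hz => by
    have hz0 : 0 < ‖z‖ := by linarith [hhalf z hz]
    calc ‖f z‖ ≤ η * (‖z‖ ^ k)⁻¹ := by
          rw [← div_eq_mul_inv, le_div_iff₀ (by positivity)]; linarith [hsmall z hz]
      _ ≤ 2 ^ k * η * (‖x‖ ^ k)⁻¹ := mul_inv_pow_le_of_half_le k hη hx (hhalf z hz)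
  have hM : ∀ z ∈ closedBall x t,
      ‖fderiv ℝ (fderiv ℝ f) z‖ ≤ 2 ^ (k + 2) * C * (‖x‖ ^ (k + 2))⁻¹ := fun z hz =>
    (hHess z hz).trans (mul_inv_pow_le_of_half_le _ hC hx (hhalf z hz))
  calc ‖x‖ ^ (k + 1) * ‖fderiv ℝ f x‖
      ≤ ‖x‖ ^ (k + 1) * (2 * (2 ^ k * η * (‖x‖ ^ k)⁻¹) / t
          + 2 ^ (k + 2) * C * (‖x‖ ^ (k + 2))⁻¹ * t) := by
        gcongr; exact norm_fderiv_le_of_norm_le_of_norm_hessian_le ht hf hA hM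
    _ = 2 ^ (k + 1) * η / δ + 2 ^ (k + 2) * C * δ := by
        simp only [t]; field_simp; ring

theorem tendsto_norm_pow_succ_mul_norm_fderiv {f : E → F} {k : ℕ} {C : ℝ}
    (hf : ∀ᶠ x in comap (‖·‖) atTop, ContDiffAt ℝ 2 f x)
    (hHess : ∀ᶠ x in comap (‖·‖) atTop,
      ‖fderiv ℝ (fderiv ℝ f) x‖ ≤ C * (‖x‖ ^ (k + 2))⁻¹)
    (hlim : Tendsto (fun x => ‖x‖ ^ k * ‖f x‖) (comap (‖·‖) atTop) (nhds 0)) :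
    Tendsto (fun x => ‖x‖ ^ (k + 1) * ‖fderiv ℝ f x‖) (comap (‖·‖) atTop) (nhds 0) := by
  refine tendsto_order.2 ⟨fun a ha => .of_forall fun x => ha.trans_le (by positivity),
    fun ε hε => ?_⟩
  have hCδ : Tendsto (fun δ : ℝ => 2 ^ (k + 2) * C * δ) (nhdsWithin 0 (Ioi 0)) (nhds 0) := by
    refine tendsto_nhdsWithin_of_tendsto_nhds ?_
    simpa using (continuous_const_mul (2 ^ (k + 2) * C)).tendsto (0 : ℝ)
  obtain ⟨δ, hδε, hδ0, hδ⟩ : ∃ δ : ℝ, 2 ^ (k + 2) * C * δ < ε / 2 ∧ δ ∈ Ioc 0 (1 / 2) :=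
    ((hCδ.eventually (gt_mem_nhds (half_pos hε))).and
      (Ioc_mem_nhdsGT (by norm_num))).exists
  set η := ε * δ / 2 ^ (k + 2)
  have hsmall : ∀ᶠ x in comap (‖·‖) atTop, ‖x‖ ^ k * ‖f x‖ ≤ η :=
    hlim.eventually (ge_mem_nhds (by positivity))
  filter_upwards [eventually_forall_mem_closedBall_mul_norm ((hf.and hHess).and hsmall) hδ,
    tendsto_comap.eventually (eventually_gt_atTop 0)] with x hball hx
  calc ‖x‖ ^ (k + 1) * ‖fderiv ℝ f x‖ ≤ 2 ^ (k + 1) * η / δ + 2 ^ (k + 2) * C * δ :=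
        norm_pow_succ_mul_norm_fderiv_le hx hδ0 hδ (fun z hz => (hball z hz).1.1)
          (fun z hz => (hball z hz).1.2) (fun z hz => (hball z hz).2)
    _ = ε / 2 + 2 ^ (k + 2) * C * δ := by simp only [η]; field_simp; ring
    _ < ε := by linarith

theorem stmt15_general (h : EuclideanSpace ℝ (Fin 3) → ℝ)
    (hreg : ContDiffOn ℝ 2 h {x : EuclideanSpace ℝ (Fin 3) | 1 ≤ ‖x‖})
    (C : ℝ)
    (hHess : ∀ x : EuclideanSpace ℝ (Fin 3), 1 ≤ ‖x‖ →
      ‖fderiv ℝ (fun y : EuclideanSpace ℝ (Fin 3) => fderiv ℝ h y) x‖ ≤ C * (‖x‖ ^ 6)⁻¹)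
    (hlim : Tendsto (fun x : EuclideanSpace ℝ (Fin 3) => ‖x‖ ^ 4 * h x)
      (Filter.comap (fun x : EuclideanSpace ℝ (Fin 3) => ‖x‖) atTop) (nhds 0)) :
    Tendsto (fun x : EuclideanSpace ℝ (Fin 3) => ‖x‖ ^ 5 * ‖gradient h x‖)
      (Filter.comap (fun x : EuclideanSpace ℝ (Fin 3) => ‖x‖) atTop) (nhds 0) := by
  have hfar : ∀ᶠ x : EuclideanSpace ℝ (Fin 3) in comap (‖·‖) atTop, 1 < ‖x‖ :=
    tendsto_comap.eventually (eventually_gt_atTop 1)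
  have hopen : IsOpen {x : EuclideanSpace ℝ (Fin 3) | 1 < ‖x‖} :=
    isOpen_lt continuous_const continuous_norm
  have hdecay := tendsto_norm_pow_succ_mul_norm_fderiv (k := 4)
    (hfar.mono fun x hx => hreg.contDiffAt
      (mem_of_superset (hopen.mem_nhds hx) (ofPred_subset_ofPred_of_imp fun _ => le_of_lt)))
    (hfar.mono fun x hx => hHess x hx.le)
    (by simpa using tendsto_zero_iff_norm_tendsto_zero.1 hlim)
  simpa only [← toDual_gradient, LinearIsometryEquiv.norm_map] using hdecay

/-- If `h` is `C²` on `{|x| ≥ 1}` with Hessian of operator norm at most `C|x|⁻⁶` there,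
and `|x|⁴ h(x) → 0` as `|x| → ∞`, then `|x|⁵|∇h(x)| → 0` as `|x| → ∞`. -/
theorem stmt15 (h : EuclideanSpace ℝ (Fin 3) → ℝ)
    (hreg : ContDiffOn ℝ 2 h {x : EuclideanSpace ℝ (Fin 3) | 1 ≤ ‖x‖})
    (C : ℝ) (hC : 0 < C)
    (hHess : ∀ x : EuclideanSpace ℝ (Fin 3), 1 ≤ ‖x‖ →
      ‖fderiv ℝ (fun y : EuclideanSpace ℝ (Fin 3) => fderiv ℝ h y) x‖ ≤ C * (‖x‖ ^ 6)⁻¹)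
    (hlim : Tendsto (fun x : EuclideanSpace ℝ (Fin 3) => ‖x‖ ^ 4 * h x)
      (Filter.comap (fun x : EuclideanSpace ℝ (Fin 3) => ‖x‖) atTop) (nhds 0)) :
    Tendsto (fun x : EuclideanSpace ℝ (Fin 3) => ‖x‖ ^ 5 * ‖gradient h x‖)
      (Filter.comap (fun x : EuclideanSpace ℝ (Fin 3) => ‖x‖) atTop) (nhds 0) :=
  stmt15_general h hreg C hHess hlim
end

section
/- Let S : (0,∞) → ℝ be smooth and suppose that for every nonnegative integer l there is a constant C_l > 0 with |S^{(l)}(s)| ≤ C_l s^{−4−l} for all s > 0. Define Ψ(s) = s^{−1} ∫_s^∞ (t − s) t S(t) dt. Then: (i) Ψ is well defined and smooth on (0,∞); (ii) Ψ''(s) + 2 s^{−1} Ψ'(s) = S(s) for all s > 0, equivalently, the radial function x ↦ Ψ(|x|) on ℝ³ ∖ {0} has Euclidean Laplacian equal to S(|x|); (iii) for every nonnegative integer l there is a constant C'_l > 0 with |Ψ^{(l)}(s)| ≤ C'_l s^{−2−l} for all s > 0. -/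
/-!
Splitting the kernel `(t - s) t = t² - s t` gives `Ψ(s) = s⁻¹ A(s) - B(s)` with the tail moments
`A(s) = ∫_s^∞ t² S` and `B(s) = ∫_s^∞ t S`. In `Ψ'` the terms coming from `A'` and `B'` cancel,
so `Ψ' = -s⁻² A`; together with `A' = -s² S` this gives both smoothness and
`Ψ'' + 2 s⁻¹ Ψ' = S`.

For the decay, say that `f` decays with order `n` (`DecaysWithDerivs n f`) if
`|f⁽ˡ⁾(s)| ≲ s^(-n-l)` for all `l`. Orders add under products (Leibniz rule), and `f` decays with
order `n` as soon as `|f| ≲ s^(-n)` and `f'` decays with order `n + 1`. Hence `A` has order `1`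
(`|A| ≲ s⁻¹`, `A' = -s² S`), and then `Ψ` has order `2` (`|Ψ| ≲ s⁻²`, `Ψ' = -s⁻² A`).
-/

open Real MeasureTheory Set

section TailIntegral

variable {f : ℝ → ℝ} {C s : ℝ}

lemma rpow_neg_two_eqOn_inv_sq :
    EqOn (fun t : ℝ => t ^ (-2 : ℝ)) (fun t => (t ^ 2)⁻¹) (Ioi 0) :=
  fun t ht => by simp [Real.rpow_neg (le_of_lt ht)]

lemma integrableOn_Ioi_inv_sq (hs : 0 < s) : IntegrableOn (fun t : ℝ => (t ^ 2)⁻¹) (Ioi s) :=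
  (integrableOn_Ioi_rpow_of_lt (by norm_num) hs).congr_fun
    (rpow_neg_two_eqOn_inv_sq.mono (Ioi_subset_Ioi hs.le)) measurableSet_Ioi

lemma integral_Ioi_inv_sq (hs : 0 < s) : ∫ t in Ioi s, (t ^ 2)⁻¹ = s⁻¹ := by
  rw [← setIntegral_congr_fun measurableSet_Ioi
      (rpow_neg_two_eqOn_inv_sq.mono (Ioi_subset_Ioi hs.le)),
    integral_Ioi_rpow_of_lt (by norm_num) hs]
  norm_num [Real.rpow_neg_one]

lemma integrableOn_Ioi_of_abs_le_inv_sq (hs : 0 < s) (hf : ContinuousOn f (Ioi s))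
    (hC : ∀ t > s, |f t| ≤ C * (t ^ 2)⁻¹) : IntegrableOn f (Ioi s) :=
  ((integrableOn_Ioi_inv_sq hs).const_mul C).mono' (hf.aestronglyMeasurable measurableSet_Ioi)
    ((ae_restrict_iff' measurableSet_Ioi).2 (.of_forall hC))

lemma abs_integral_Ioi_le_of_abs_le_inv_sq (hs : 0 < s)
    (hC : ∀ t > s, |f t| ≤ C * (t ^ 2)⁻¹) : |∫ t in Ioi s, f t| ≤ C * s⁻¹ := by
  rw [← integral_Ioi_inv_sq hs, ← integral_const_mul]
  exact norm_integral_le_of_norm_le (f := f) ((integrableOn_Ioi_inv_sq hs).const_mul C)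
    ((ae_restrict_iff' measurableSet_Ioi).2 (.of_forall fun t ht => hC t ht))

end TailIntegral

lemma hasDerivAt_integral_Ioi {E : Type*} [NormedAddCommGroup E] [NormedSpace ℝ E]
    [CompleteSpace E] {f : ℝ → E} {a s : ℝ} (hf : IntegrableOn f (Ioi a)) (has : a < s)
    (hcont : ContinuousAt f s) : HasDerivAt (fun u => ∫ t in Ioi u, f t) (-f s) s := by
  have hF : HasDerivAt (fun u => ∫ t in a..u, f t) (f s) s :=
    intervalIntegral.integral_hasDerivAt_right
      ((intervalIntegrable_iff_integrableOn_Ioc_of_le has.le).2 (hf.mono_set Ioc_subset_Ioi_self))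
      ⟨Ioi a, Ioi_mem_nhds has, hf.aestronglyMeasurable⟩ hcont
  refine (((hasDerivAt_const s (∫ t in Ioi a, f t)).sub hF).congr_of_eventuallyEq ?_).congr_deriv
    (zero_sub _)
  filter_upwards [Ioi_mem_nhds has] with u hu
  exact (sub_eq_of_eq_add' (intervalIntegral.integral_interval_add_Ioi hf
    (hf.mono_set (Ioi_subset_Ioi hu.le))).symm).symm

lemma contDiffOn_of_hasDerivAt {f g : ℝ → ℝ} {U : Set ℝ} (hU : IsOpen U)
    (hfg : ∀ s ∈ U, HasDerivAt f (g s) s) (hg : ContDiffOn ℝ (⊤ : ℕ∞) g U) :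
    ContDiffOn ℝ (⊤ : ℕ∞) f U := by
  rw [contDiffOn_infty_iff_deriv_of_isOpen hU]
  exact ⟨fun s hs => (hfg s hs).differentiableAt.differentiableWithinAt,
    hg.congr fun s hs => (hfg s hs).deriv⟩

lemma contDiffOn_inv_pow (k : ℕ) : ContDiffOn ℝ (⊤ : ℕ∞) (fun s : ℝ => (s ^ k)⁻¹) (Ioi 0) :=
  (contDiff_id.pow k).contDiffOn.inv fun _ hs => pow_ne_zero k (ne_of_gt hs)

def DecaysWithDerivs (n : ℤ) (f : ℝ → ℝ) : Prop :=
  ∀ l : ℕ, ∃ C > 0, ∀ s > (0 : ℝ), |iteratedDerivWithin l f (Ioi 0) s| ≤ C * s ^ (-(n + l))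

lemma decaysWithDerivs_iff_inv_pow {k : ℕ} {f : ℝ → ℝ} :
    DecaysWithDerivs k f ↔ ∀ l : ℕ, ∃ C > 0, ∀ s > (0 : ℝ),
      |iteratedDerivWithin l f (Ioi 0) s| ≤ C * (s ^ (k + l))⁻¹ := by
  simp only [DecaysWithDerivs, zpow_neg, ← Nat.cast_add, zpow_natCast]

namespace DecaysWithDerivs

variable {n m : ℤ} {f g : ℝ → ℝ}

lemma exists_abs_le_inv_pow {k : ℕ} (hf : DecaysWithDerivs k f) :
    ∃ C > 0, ∀ s > (0 : ℝ), |f s| ≤ C * (s ^ k)⁻¹ := by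
  simpa using hf 0

lemma congr (hf : DecaysWithDerivs n f) (hfg : EqOn f g (Ioi 0)) : DecaysWithDerivs n g := by
  intro l
  obtain ⟨C, hC, hb⟩ := hf l
  exact ⟨C, hC, fun s hs => iteratedDerivWithin_congr hfg hs ▸ hb s hs⟩

lemma neg (hf : DecaysWithDerivs n f) : DecaysWithDerivs n (-f) := by
  simpa [DecaysWithDerivs, iteratedDerivWithin_neg] using hf

lemma of_derivWithin (h₀ : ∃ C > 0, ∀ s > (0 : ℝ), |f s| ≤ C * s ^ (-n))
    (h₁ : DecaysWithDerivs (n + 1) (derivWithin f (Ioi 0))) : DecaysWithDerivs n f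
  | 0 => by simpa using h₀
  | l + 1 => by
    obtain ⟨C, hC, hb⟩ := h₁ l
    refine ⟨C, hC, fun s hs => ?_⟩
    rw [iteratedDerivWithin_succ']
    convert hb s hs using 3
    push_cast
    ring

lemma mul (hf : DecaysWithDerivs n f) (hg : DecaysWithDerivs m g)
    (hf' : ContDiffOn ℝ (⊤ : ℕ∞) f (Ioi 0)) (hg' : ContDiffOn ℝ (⊤ : ℕ∞) g (Ioi 0)) :
    DecaysWithDerivs (n + m) (f * g) := by
  intro l
  choose Cf hCf hbf using hf
  choose Cg hCg hbg using hg
  refine ⟨∑ i ∈ Finset.range (l + 1), l.choose i * Cf i * Cg (l - i),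
    Finset.sum_pos (fun i hi => by
      have := Nat.choose_pos (Nat.lt_succ_iff.1 (Finset.mem_range.1 hi))
      exact mul_pos (mul_pos (by positivity) (hCf i)) (hCg _))
      Finset.nonempty_range_add_one, fun s hs => ?_⟩
  rw [iteratedDerivWithin_mul (mem_Ioi.2 hs) (uniqueDiffOn_Ioi 0)
    ((hf'.contDiffWithinAt hs).of_le (by exact_mod_cast le_top))
    ((hg'.contDiffWithinAt hs).of_le (by exact_mod_cast le_top)), Finset.sum_mul]
  refine (Finset.abs_sum_le_sum_abs _ _).trans (Finset.sum_le_sum fun i hi => ?_)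
  have hil : i ≤ l := Nat.lt_succ_iff.1 (Finset.mem_range.1 hi)
  have hpow : s ^ (-(n + i : ℤ)) * s ^ (-(m + (l - i : ℕ) : ℤ)) = s ^ (-(n + m + l)) := by
    rw [← zpow_add₀ hs.ne', Nat.cast_sub hil]; ring_nf
  have hfi := hbf i s hs
  have hgi := hbg (l - i) s hs
  rw [abs_mul, abs_mul, Nat.abs_cast, ← hpow]
  calc _ ≤ l.choose i * (Cf i * s ^ (-(n + i : ℤ))) *
        (Cg (l - i) * s ^ (-(m + (l - i : ℕ) : ℤ))) := by
        gcongr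
        exact mul_nonneg (Nat.cast_nonneg _) ((abs_nonneg _).trans hfi)
    _ = _ := by ring

end DecaysWithDerivs

lemma decaysWithDerivs_zpow (k : ℤ) : DecaysWithDerivs (-k) (· ^ k) := by
  intro l
  refine ⟨|∏ i ∈ Finset.range l, ((k : ℝ) - i)| + 1, by positivity, fun s hs => ?_⟩
  rw [iteratedDerivWithin_of_isOpen_eq_iterate isOpen_Ioi hs, iter_deriv_zpow, abs_mul,
    abs_of_pos (zpow_pos hs _), neg_add, neg_neg, ← sub_eq_add_neg]
  gcongr
  linarith

lemma decaysWithDerivs_pow (k : ℕ) : DecaysWithDerivs (-k) (· ^ k) := by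
  simpa using decaysWithDerivs_zpow k

lemma decaysWithDerivs_inv_pow (k : ℕ) : DecaysWithDerivs k (fun s => (s ^ k)⁻¹) := by
  simpa using decaysWithDerivs_zpow (-k)

lemma abs_pow_le_inv_mul_sq {k : ℕ} {u t : ℝ} (hk : k ≤ 2) (hu : 0 < u) (hut : u ≤ t) :
    |t ^ k| ≤ (u ^ (2 - k))⁻¹ * t ^ 2 := by
  have ht : 0 < t := hu.trans_le hut
  rw [abs_of_pos (pow_pos ht k), le_inv_mul_iff₀ (pow_pos hu _), ← pow_mul_pow_sub t hk, mul_comm]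
  gcongr

lemma abs_sub_mul_le_sq {s t : ℝ} (hs : 0 ≤ s) (hst : s ≤ t) : |(t - s) * t| ≤ t ^ 2 := by
  rw [abs_of_nonneg (mul_nonneg (sub_nonneg.2 hst) (hs.trans hst)), sq]
  exact mul_le_mul_of_nonneg_right (by linarith) (hs.trans hst)

noncomputable def tailMoment (k : ℕ) (S : ℝ → ℝ) (u : ℝ) : ℝ := ∫ t in Ioi u, t ^ k * S t

noncomputable def pulseProfile (S : ℝ → ℝ) (s : ℝ) : ℝ :=
  s⁻¹ * ∫ t in Ioi s, (t - s) * t * S t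

section PulseProfile

variable {S w : ℝ → ℝ} {C M u s : ℝ} {k : ℕ}
  (hS : ContinuousOn S (Ioi 0)) (hSC : ∀ t > 0, |S t| ≤ C * (t ^ 4)⁻¹)
include hSC

lemma abs_mul_le_inv_sq_of_abs_le_sq (hu : 0 < u) (hwM : ∀ t > u, |w t| ≤ M * t ^ 2) :
    ∀ t > u, |w t * S t| ≤ M * C * (t ^ 2)⁻¹ := by
  intro t ht
  rw [abs_mul]
  calc |w t| * |S t| ≤ M * t ^ 2 * (C * (t ^ 4)⁻¹) :=
        mul_le_mul (hwM t ht) (hSC t (hu.trans ht)) (abs_nonneg _)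
          ((abs_nonneg _).trans (hwM t ht))
    _ = M * C * (t ^ 2)⁻¹ := by field_simp

lemma abs_integral_Ioi_mul_le (hu : 0 < u) (hwM : ∀ t > u, |w t| ≤ M * t ^ 2) :
    |∫ t in Ioi u, w t * S t| ≤ M * C * u⁻¹ :=
  abs_integral_Ioi_le_of_abs_le_inv_sq hu (abs_mul_le_inv_sq_of_abs_le_sq hSC hu hwM)

include hS

lemma integrableOn_Ioi_mul (hu : 0 < u) (hw : ContinuousOn w (Ioi u))
    (hwM : ∀ t > u, |w t| ≤ M * t ^ 2) : IntegrableOn (fun t => w t * S t) (Ioi u) :=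
  integrableOn_Ioi_of_abs_le_inv_sq hu (hw.mul (hS.mono (Ioi_subset_Ioi hu.le)))
    (abs_mul_le_inv_sq_of_abs_le_sq hSC hu hwM)

lemma integrableOn_Ioi_pow_mul (hk : k ≤ 2) (hu : 0 < u) :
    IntegrableOn (fun t => t ^ k * S t) (Ioi u) :=
  integrableOn_Ioi_mul hS hSC hu (continuous_pow k).continuousOn
    fun _ ht => abs_pow_le_inv_mul_sq hk hu (le_of_lt ht)

lemma integrableOn_pulseProfile_integrand (hs : 0 < s) :
    IntegrableOn (fun t => (t - s) * t * S t) (Ioi s) :=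
  integrableOn_Ioi_mul (M := 1) hS hSC hs (by fun_prop) fun _ ht => by
    simpa using abs_sub_mul_le_sq hs.le (le_of_lt ht)

lemma hasDerivAt_tailMoment (hk : k ≤ 2) (hs : 0 < s) :
    HasDerivAt (tailMoment k S) (-(s ^ k * S s)) s :=
  hasDerivAt_integral_Ioi (integrableOn_Ioi_pow_mul hS hSC hk (half_pos hs)) (half_lt_self hs)
    ((continuous_pow k).continuousAt.mul (hS.continuousAt (Ioi_mem_nhds hs)))

lemma pulseProfile_eq (hs : 0 < s) :
    pulseProfile S s = s⁻¹ * tailMoment 2 S s - tailMoment 1 S s := by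
  have h : (fun t => (t - s) * t * S t) = fun t => t ^ 2 * S t - s * (t ^ 1 * S t) := by
    ext t; ring
  rw [pulseProfile, h, integral_sub (integrableOn_Ioi_pow_mul hS hSC le_rfl hs)
    ((integrableOn_Ioi_pow_mul hS hSC one_le_two hs).const_mul s), integral_const_mul,
    tailMoment, tailMoment]
  field_simp

lemma hasDerivAt_pulseProfile (hs : 0 < s) :
    HasDerivAt (pulseProfile S) (-((s ^ 2)⁻¹ * tailMoment 2 S s)) s := by
  have h := ((hasDerivAt_inv hs.ne').mul (hasDerivAt_tailMoment hS hSC le_rfl hs)).sub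
    (hasDerivAt_tailMoment hS hSC one_le_two hs)
  refine (h.congr_of_eventuallyEq ?_).congr_deriv ?_
  · filter_upwards [Ioi_mem_nhds hs] with u hu using pulseProfile_eq hS hSC hu
  · field_simp
    ring

lemma derivWithin_pulseProfile :
    EqOn (derivWithin (pulseProfile S) (Ioi 0)) (fun s => -((s ^ 2)⁻¹ * tailMoment 2 S s))
      (Ioi 0) :=
  fun s hs => (hasDerivAt_pulseProfile hS hSC hs).hasDerivWithinAt.derivWithin
    (uniqueDiffOn_Ioi 0 s hs)

lemma pulseProfile_ode (hs : 0 < s) :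
    derivWithin (derivWithin (pulseProfile S) (Ioi 0)) (Ioi 0) s
      + 2 * s⁻¹ * derivWithin (pulseProfile S) (Ioi 0) s = S s := by
  have h : HasDerivAt (fun u => -((u ^ 2)⁻¹ * tailMoment 2 S u))
      (2 * (s ^ 3)⁻¹ * tailMoment 2 S s + S s) s := by
    refine (((hasDerivAt_pow 2 s).fun_inv (pow_ne_zero 2 hs.ne')).fun_mul
      (hasDerivAt_tailMoment hS hSC le_rfl hs)).fun_neg.congr_deriv ?_
    field_simp
    ring
  rw [derivWithin_congr (derivWithin_pulseProfile hS hSC) (derivWithin_pulseProfile hS hSC hs),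
    h.hasDerivWithinAt.derivWithin (uniqueDiffOn_Ioi 0 s hs), derivWithin_pulseProfile hS hSC hs]
  field_simp
  ring

end PulseProfile

section SmoothPulseProfile

variable {S : ℝ → ℝ} (hS : ContDiffOn ℝ (⊤ : ℕ∞) S (Ioi 0))
include hS

lemma contDiffOn_tailMoment {C : ℝ} {k : ℕ} (hSC : ∀ t > 0, |S t| ≤ C * (t ^ 4)⁻¹)
    (hk : k ≤ 2) : ContDiffOn ℝ (⊤ : ℕ∞) (tailMoment k S) (Ioi 0) :=
  contDiffOn_of_hasDerivAt isOpen_Ioi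
    (fun _ hs => hasDerivAt_tailMoment hS.continuousOn hSC hk hs)
    ((contDiff_id.pow k).contDiffOn.mul hS).neg

lemma contDiffOn_pulseProfile {C : ℝ} (hSC : ∀ t > 0, |S t| ≤ C * (t ^ 4)⁻¹) :
    ContDiffOn ℝ (⊤ : ℕ∞) (pulseProfile S) (Ioi 0) :=
  contDiffOn_of_hasDerivAt isOpen_Ioi
    (fun _ hs => hasDerivAt_pulseProfile hS.continuousOn hSC hs)
    ((contDiffOn_inv_pow 2).mul (contDiffOn_tailMoment hS hSC le_rfl)).neg

lemma decaysWithDerivs_tailMoment_two (hS4 : DecaysWithDerivs 4 S) :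
    DecaysWithDerivs 1 (tailMoment 2 S) := by
  obtain ⟨C, hC, hSC⟩ := hS4.exists_abs_le_inv_pow
  refine .of_derivWithin ⟨C, hC, fun s hs => ?_⟩ ?_
  · simpa [tailMoment] using abs_integral_Ioi_mul_le (M := 1) hSC hs fun t _ => by simp
  · exact (((decaysWithDerivs_pow 2).mul hS4 (contDiff_id.pow 2).contDiffOn hS).neg).congr
      fun s hs => ((hasDerivAt_tailMoment hS.continuousOn hSC le_rfl hs).hasDerivWithinAt
        |>.derivWithin (uniqueDiffOn_Ioi 0 s hs)).symm

lemma decaysWithDerivs_pulseProfile (hS4 : DecaysWithDerivs 4 S) :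
    DecaysWithDerivs 2 (pulseProfile S) := by
  obtain ⟨C, hC, hSC⟩ := hS4.exists_abs_le_inv_pow
  refine .of_derivWithin ⟨C, hC, fun s hs => ?_⟩ ?_
  · have hI := abs_integral_Ioi_mul_le (w := fun t => (t - s) * t) (M := 1) hSC hs fun _ ht => by
      simpa using abs_sub_mul_le_sq hs.le (le_of_lt ht)
    rw [pulseProfile, abs_mul, abs_inv, abs_of_pos hs]
    calc s⁻¹ * |∫ t in Ioi s, (t - s) * t * S t| ≤ s⁻¹ * (1 * C * s⁻¹) := by gcongr
      _ = C * s ^ (-2 : ℤ) := by simp [zpow_neg, sq]; ring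
  · exact ((decaysWithDerivs_inv_pow 2).mul (decaysWithDerivs_tailMoment_two hS hS4)
      (contDiffOn_inv_pow 2) (contDiffOn_tailMoment hS hSC le_rfl)).neg.congr
      fun s hs => (derivWithin_pulseProfile hS.continuousOn hSC hs).symm

end SmoothPulseProfile

/-- Construction of the conformal factor correction with prescribed scalar-curvature
pulse: if `S` is smooth on `(0,∞)` with `|S^{(l)}(s)| ≤ C_l s^{−4−l}`, then
`Ψ(s) = s⁻¹ ∫_s^∞ (t−s) t S(t) dt` is well defined and smooth on `(0,∞)`, solves
`Ψ'' + 2s⁻¹Ψ' = S` there, and satisfies `|Ψ^{(l)}(s)| ≤ C'_l s^{−2−l}`. -/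
theorem stmt16 (S : ℝ → ℝ) (hS : ContDiffOn ℝ (⊤ : ℕ∞) S (Set.Ioi 0))
    (hdecay : ∀ l : ℕ, ∃ C > 0, ∀ s > 0,
      |iteratedDerivWithin l S (Set.Ioi 0) s| ≤ C * (s ^ (4 + l))⁻¹) :
    ∀ Ψ : ℝ → ℝ,
      (Ψ = fun s => s⁻¹ * ∫ t in Set.Ioi s, (t - s) * t * S t) →
      (∀ s > 0, IntegrableOn (fun t => (t - s) * t * S t) (Set.Ioi s)) ∧
      ContDiffOn ℝ (⊤ : ℕ∞) Ψ (Set.Ioi 0) ∧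
      (∀ s > 0, derivWithin (derivWithin Ψ (Set.Ioi 0)) (Set.Ioi 0) s
          + 2 * s⁻¹ * derivWithin Ψ (Set.Ioi 0) s = S s) ∧
      (∀ l : ℕ, ∃ C' > 0, ∀ s > 0,
        |iteratedDerivWithin l Ψ (Set.Ioi 0) s| ≤ C' * (s ^ (2 + l))⁻¹) := by
  rintro Ψ rfl
  have hS4 : DecaysWithDerivs 4 S := decaysWithDerivs_iff_inv_pow.2 hdecay
  obtain ⟨C, -, hSC⟩ := hS4.exists_abs_le_inv_pow
  exact ⟨fun _ => integrableOn_pulseProfile_integrand hS.continuousOn hSC,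
    contDiffOn_pulseProfile hS hSC,
    fun _ => pulseProfile_ode hS.continuousOn hSC,
    decaysWithDerivs_iff_inv_pow.1 (decaysWithDerivs_pulseProfile hS hS4)⟩
end
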